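/- Let d ≥ 2 and let B ⊂ ℤ^d be a finite connected set containing 0 that is not contained in [-2n, 2n-1]^d. Define B_n = {z ∈ ℤ^d : (4nz + [-2n,2n-1]^d) ∩ B ≠ ∅}. Then B_n is a finite connected subset of ℤ^d and (4n)^d · #B_n ≥ #B. -/

import Mathlib

def norm1 {d : ℕ} (x : Fin d → ℤ) : ℕ := ∑ i, (x i).natAbs

def adj {d : ℕ} (x y : Fin d → ℤ) : Prop := norm1 (x - y) = 1

def IsPath {d : ℕ} (m : ℕ) (γ : Fin (m + 1) → Fin d → ℤ) : Prop :=
  ∀ i : Fin m, adj (γ i.castSucc) (γ i.succ)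

def Conn {d : ℕ} (S : Set (Fin d → ℤ)) : Prop :=
  S.Nonempty ∧ ∀ x ∈ S, ∀ y ∈ S, ∃ m γ, IsPath m γ ∧ (∀ i, γ i ∈ S) ∧
    γ 0 = x ∧ γ (Fin.last m) = y

/-- The covering of B by boxes of side 4n: B_n = {z : (4nz + [-2n,2n-1]^d) ∩ B ≠ ∅}. -/
def coverSet {d : ℕ} (n : ℕ) (B : Set (Fin d → ℤ)) : Set (Fin d → ℤ) :=
  {z | ∃ b ∈ B, ∀ i, -(2 * (n : ℤ)) ≤ b i - 4 * n * z i ∧ b i - 4 * n * z i ≤ 2 * n - 1}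

/-!
Cutting `ℤ^d` into the blocks `4n z + [-2n, 2n-1]^d`, the set `B_n` is the image of `B` under the
block-index map `b ↦ ⌊(b + 2n) / 4n⌋` (coordinatewise). This map does not increase `ℓ¹`-distances,
so it sends neighbours to neighbours or to a single point, and a path in `B` becomes a path in `B_n`
once repeated points are dropped. Each fibre of the map lies in one block of `(4n)^d` points, which
gives `#B ≤ (4n)^d · #B_n`.
-/

theorem Int.natAbs_ediv_sub_ediv_le {q : ℤ} (hq : 0 < q) (a b : ℤ) :
    (a / q - b / q).natAbs ≤ (a - b).natAbs := by
  wlog hba : b ≤ a generalizing a b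
  · rw [← Int.natAbs_neg, neg_sub, ← Int.natAbs_neg (a - b), neg_sub]
    exact this b a (by omega)
  have hmono : b / q ≤ a / q := Int.ediv_le_ediv hq hba
  have hstep : a / q ≤ b / q + (a - b) :=
    calc a / q ≤ (b + (a - b) * q) / q := Int.ediv_le_ediv hq (by nlinarith)
      _ = b / q + (a - b) := Int.add_mul_ediv_right _ _ hq.ne'
  omega

section Lattice

variable {d : ℕ}

theorem norm1_eq_zero {x : Fin d → ℤ} : norm1 x = 0 ↔ x = 0 := by
  simp [norm1, Finset.sum_eq_zero_iff, funext_iff]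

theorem eq_or_adj_of_norm1_le {x y u v : Fin d → ℤ} (h : norm1 (u - v) ≤ norm1 (x - y))
    (hxy : adj x y) : u = v ∨ adj u v := by
  rw [adj] at hxy
  rcases Nat.le_one_iff_eq_zero_or_eq_one.1 (hxy ▸ h) with h0 | h1
  · exact .inl (sub_eq_zero.1 (norm1_eq_zero.1 h0))
  · exact .inr h1

theorem exists_isPath_of_eq_or_adj {S : Set (Fin d → ℤ)} : ∀ {m : ℕ} (γ : Fin (m + 1) → Fin d → ℤ),
    (∀ i : Fin m, γ i.castSucc = γ i.succ ∨ adj (γ i.castSucc) (γ i.succ)) → (∀ i, γ i ∈ S) →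
    ∃ m' δ, IsPath m' δ ∧ (∀ i, δ i ∈ S) ∧ δ 0 = γ 0 ∧ δ (Fin.last m') = γ (Fin.last m)
  | 0, γ, _, hS => ⟨0, γ, nofun, hS, rfl, rfl⟩
  | m + 1, γ, hstep, hS => by
    obtain ⟨m', δ, hδ, hδS, hδ0, hδlast⟩ :=
      exists_isPath_of_eq_or_adj (Fin.tail γ) (fun i => hstep i.succ) (fun i => hS i.succ)
    rcases hstep 0 with heq | hadj
    · exact ⟨m', δ, hδ, hδS, hδ0.trans heq.symm, hδlast⟩
    · refine ⟨m' + 1, Fin.cons (γ 0) δ, Fin.forall_fin_succ.2 ⟨?_, fun i => ?_⟩,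
        Fin.forall_fin_succ.2 ⟨hS 0, hδS⟩, rfl, hδlast⟩
      · simpa [IsPath, hδ0, Fin.tail] using hadj
      · simpa [← Fin.succ_castSucc] using hδ i

theorem Conn.image {S : Set (Fin d → ℤ)} (hS : Conn S) {f : (Fin d → ℤ) → Fin d → ℤ}
    (hf : ∀ x y, adj x y → f x = f y ∨ adj (f x) (f y)) : Conn (f '' S) := by
  refine ⟨hS.1.image f, ?_⟩
  rintro _ ⟨x, hx, rfl⟩ _ ⟨y, hy, rfl⟩
  obtain ⟨m, γ, hγ, hγS, rfl, rfl⟩ := hS.2 x hx y hy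
  exact exists_isPath_of_eq_or_adj (f ∘ γ) (fun i => hf _ _ (hγ i))
    (fun i => Set.mem_image_of_mem f (hγS i))

/-- The index `z` of the block `q z - r + [0, q - 1]^d` containing `b`. -/
def blockIndex (q : ℕ) (r : ℤ) (b : Fin d → ℤ) : Fin d → ℤ := fun i => (b i + r) / q

theorem blockIndex_eq_iff {q : ℕ} {r : ℤ} (hq : 0 < q) {b z : Fin d → ℤ} :
    blockIndex q r b = z ↔ ∀ i, 0 ≤ b i + r - q * z i ∧ b i + r - q * z i < q := by
  have hq' : (0 : ℤ) < q := by exact_mod_cast hq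
  refine funext_iff.trans (forall_congr' fun i => ?_)
  have key := Int.ediv_emod_unique (a := b i + r) (r := b i + r - q * z i) (q := z i) hq'
  rw [Int.emod_def] at key
  exact ⟨fun h => (key.1 ⟨h, by rw [← h]; rfl⟩).2, fun h => (key.2 ⟨by ring, h⟩).1⟩

theorem norm1_blockIndex_sub_le {q : ℕ} (hq : 0 < q) (r : ℤ) (x y : Fin d → ℤ) :
    norm1 (blockIndex q r x - blockIndex q r y) ≤ norm1 (x - y) :=
  Finset.sum_le_sum fun i _ => by
    simpa [blockIndex] using
      Int.natAbs_ediv_sub_ediv_le (by exact_mod_cast hq : (0 : ℤ) < q) (x i + r) (y i + r)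

theorem ncard_le_pow_mul_ncard_image_blockIndex {q : ℕ} (hq : 0 < q) (r : ℤ)
    (B : Set (Fin d → ℤ)) :
    B.ncard ≤ q ^ d * (blockIndex q r '' B).ncard := by
  classical
  rcases B.finite_or_infinite with hB | hB
  · obtain ⟨s, rfl⟩ := hB.exists_finset_coe
    rw [← Finset.coe_image, Set.ncard_coe_finset, Set.ncard_coe_finset]
    refine Finset.card_le_mul_card_image _ _ fun z _ => ?_
    calc (s.filter fun b => blockIndex q r b = z).card
        ≤ (Finset.Icc (fun i => q * z i - r) (fun i => q * z i - r + q - 1)).card := by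
          refine Finset.card_le_card fun b hb => ?_
          have := (blockIndex_eq_iff hq).1 (Finset.mem_filter.1 hb).2
          simp only [Finset.mem_Icc, Pi.le_def]
          constructor <;> intro i <;> linarith [this i]
      _ = q ^ d := by simp [Pi.card_Icc, Int.card_Icc]
  · simp [hB.ncard]

theorem coverSet_eq_image_blockIndex {n : ℕ} (hn : 1 ≤ n) (B : Set (Fin d → ℤ)) :
    coverSet n B = blockIndex (4 * n) (2 * n) '' B := by
  ext z
  simp only [coverSet, Set.mem_ofPred_eq, Set.mem_image, blockIndex_eq_iff (by omega : 0 < 4 * n)]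
  push_cast
  refine exists_congr fun b => and_congr_right fun _ => forall_congr' fun i => ?_
  omega

end Lattice

theorem stmt4_general (d n : ℕ) (hn : 1 ≤ n)
    (B : Set (Fin d → ℤ)) (hBfin : B.Finite) (hBconn : Conn B) :
    (coverSet n B).Finite ∧ Conn (coverSet n B) ∧
      B.ncard ≤ (4 * n) ^ d * (coverSet n B).ncard := by
  have hq : 0 < 4 * n := by omega
  rw [coverSet_eq_image_blockIndex hn]
  exact ⟨hBfin.image _,
    hBconn.image fun x y => eq_or_adj_of_norm1_le (norm1_blockIndex_sub_le hq _ x y),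
    ncard_le_pow_mul_ncard_image_blockIndex hq _ B⟩

/-- If B is a finite connected set containing 0, not contained in [-2n,2n-1]^d,
then B_n is finite, connected, and (4n)^d · #B_n ≥ #B. -/
theorem stmt4 (d n : ℕ) (hd : 2 ≤ d) (hn : 1 ≤ n)
    (B : Set (Fin d → ℤ)) (hBfin : B.Finite) (hBconn : Conn B)
    (h0 : (0 : Fin d → ℤ) ∈ B)
    (hbig : ¬ ∀ x ∈ B, ∀ i, -(2 * (n : ℤ)) ≤ x i ∧ x i ≤ 2 * n - 1) :
    (coverSet n B).Finite ∧ Conn (coverSet n B) ∧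
      B.ncard ≤ (4 * n) ^ d * (coverSet n B).ncard :=
  stmt4_general d n hn B hBfin hBconn
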